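/- arXiv:2207.11854 — 5 statements merged into one kernel-verified Lean document; each statement's English description precedes it below -/
import Mathlib

section
/- Let 𝒟 be a preadditive category and let S be a finite set of objects of 𝒟 such that every object of 𝒟 is isomorphic to a finite biproduct of objects belonging to S. Let (H_n)_{n∈ℕ} be an inductive system of additive functors from 𝒟 to the category AddCommGrp of abelian groups, with connecting natural transformations ν_n : H_n ⟶ H_{n+1} whose component (ν_n)_Q : H_n(Q) → H_{n+1}(Q) is injective for every object Q of 𝒟. Let H be the colimit of this system in the functor category, with canonical natural transformations λ_n : H_n ⟶ H. Let E : 𝒟 ⥤ AddCommGrp be an additive functor such that E(Q) is a free abelian group of finite rank for every object Q of 𝒟. Then for every natural transformation α : E ⟶ H there exist m ∈ ℕ and a natural transformation α′ : E ⟶ H_m such that α = λ_m ∘ α′. -/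
/-!
Since the connecting maps are injective, so is every component of every `λ_m`; hence `α`
factors through `λ_m` as soon as each `α_Q` lands in the image of `λ_m` at `Q`, naturality of
the lift being forced by injectivity. For fixed `Q` the preimages under `α_Q` of these images
form an increasing chain of subgroups exhausting the finitely generated group `E(Q)`, so one
of them is all of `E(Q)`. Taking the largest such stage over the finite set `S` works for all
of `S` at once, and additivity of `E` carries the factorization over to finite biproducts and
isomorphic objects, i.e. to all of `𝒟`.
-/

open CategoryTheory CategoryTheory.Limits

universe w v u

theorem Module.Finite.exists_eq_top_of_directed {R M : Type*} [Semiring R] [AddCommMonoid M]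
    [Module R M] [Module.Finite R M] {ι : Type*} {p : ι → Submodule R M}
    (hp : Directed (· ≤ ·) p) (hcover : ∀ x, ∃ i, x ∈ p i) : ∃ i, p i = ⊤ := by
  have htop : IsCompactElement (⊤ : Submodule R M) :=
    (Submodule.fg_iff_compact ⊤).1 Module.Finite.fg_top
  have hle : (⊤ : Submodule R M) ≤ sSup (Set.range p) := fun x _ => by
    obtain ⟨i, hi⟩ := hcover x
    exact Submodule.mem_sSup_of_mem (Set.mem_range_self i) hi
  obtain ⟨_, ⟨i, rfl⟩, hi⟩ := (CompleteLattice.isCompactElement_iff_le_of_directed_sSup_le _ _).1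
    htop (Set.range p) ⟨_, (hcover 0).choose, rfl⟩ hp.directedOn_range hle
  exact ⟨i, top_le_iff.1 hi⟩

theorem AddCommGrpCat.exists_comp_eq_of_range_le {A B C : AddCommGrpCat.{w}} {f : A ⟶ B}
    (hf : Function.Injective f) {g : C ⟶ B} (hgf : g.hom.range ≤ f.hom.range) :
    ∃ β : C ⟶ A, β ≫ f = g :=
  ⟨ofHom ((AddMonoidHom.ofInjective (f := f.hom) hf).symm.toAddMonoidHom.comp
      (g.hom.codRestrict _ fun x => hgf ⟨x, rfl⟩)),
    by ext x; simp⟩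

namespace CategoryTheory.NatTrans

variable {C : Type*} [Category C] {D : Type*} [Category D] {E F G : D ⥤ C}

def FactorsAt (l : F ⟶ G) (α : E ⟶ G) (Q : D) : Prop :=
  ∃ β : E.obj Q ⟶ F.obj Q, β ≫ l.app Q = α.app Q

variable {l : F ⟶ G} {α : E ⟶ G}

theorem FactorsAt.of_iso {Q Q' : D} (h : FactorsAt l α Q) (e : Q ≅ Q') : FactorsAt l α Q' := by
  obtain ⟨β, hβ⟩ := h
  refine ⟨E.map e.inv ≫ β ≫ F.map e.hom, ?_⟩
  rw [Category.assoc, Category.assoc, l.naturality, reassoc_of% hβ, α.naturality_assoc,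
    ← G.map_comp, e.inv_hom_id, G.map_id, Category.comp_id]

theorem FactorsAt.biproduct [Preadditive C] [Preadditive D] [E.Additive] {ι : Type} [Fintype ι]
    {g : ι → D} [HasBiproduct g] (h : ∀ k, FactorsAt l α (g k)) : FactorsAt l α (⨁ g) := by
  choose β hβ using h
  refine ⟨∑ k, E.map (biproduct.π g k) ≫ β k ≫ F.map (biproduct.ι g k), ?_⟩
  have hterm : ∀ k, (E.map (biproduct.π g k) ≫ β k ≫ F.map (biproduct.ι g k)) ≫ l.app (⨁ g) =
      E.map (biproduct.π g k ≫ biproduct.ι g k) ≫ α.app (⨁ g) := fun k => by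
    rw [Category.assoc, Category.assoc, l.naturality, reassoc_of% (hβ k), ← α.naturality,
      Functor.map_comp_assoc]
  rw [Preadditive.sum_comp, Finset.sum_congr rfl fun k _ => hterm k, ← Preadditive.sum_comp,
    ← E.map_sum, biproduct.total, E.map_id, Category.id_comp]

theorem exists_comp_eq_of_forall_factorsAt (hl : ∀ Q, Mono (l.app Q))
    (h : ∀ Q, FactorsAt l α Q) : ∃ β : E ⟶ F, β ≫ l = α := by
  choose β hβ using h
  refine ⟨{ app := β, naturality := fun Q Q' φ => ?_ }, NatTrans.ext (funext hβ)⟩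
  rw [← cancel_mono (l.app Q'), Category.assoc, Category.assoc, l.naturality, hβ, α.naturality,
    reassoc_of% (hβ Q)]

theorem FactorsAt.ι_app_of_hom {J : Type*} [Category J] {K : J ⥤ D ⥤ C} {c : Cocone K}
    {α : E ⟶ c.pt} {Q : D} {i j : J} (h : FactorsAt (c.ι.app i) α Q) (f : i ⟶ j) :
    FactorsAt (c.ι.app j) α Q := by
  obtain ⟨β, hβ⟩ := h
  exact ⟨β ≫ (K.map f).app Q, by rw [Category.assoc, ← NatTrans.comp_app, c.w, hβ]⟩

end CategoryTheory.NatTrans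

namespace CategoryTheory.Limits

variable {J : Type} [SmallCategory J] {D : Type u} [Category.{v} D]
  {K : J ⥤ D ⥤ AddCommGrpCat.{w}}

attribute [local instance] preservesSmallestFilteredColimits_of_preservesFilteredColimits

theorem IsColimit.exists_ι_app_app_eq [IsFiltered J] {c : Cocone K} (hc : IsColimit c) {Q : D}
    (x : c.pt.obj Q) :
    ∃ (j : J) (y : (K.obj j).obj Q), (c.ι.app j).app Q y = x :=
  Concrete.isColimit_exists_rep (K ⋙ (evaluation D _).obj Q) (isColimitOfPreserves _ hc) x

theorem IsColimit.ι_app_app_injective [IsFiltered J] {c : Cocone K} (hc : IsColimit c) {Q : D}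
    (hK : ∀ {i j : J} (f : i ⟶ j), Function.Injective ((K.map f).app Q)) (j : J) :
    Function.Injective ((c.ι.app j).app Q) := by
  intro x y hxy
  obtain ⟨k, f, g, hfg⟩ := Concrete.isColimit_exists_of_rep_eq (K ⋙ (evaluation D _).obj Q)
    (isColimitOfPreserves _ hc) x y hxy
  obtain ⟨h, hh⟩ : ∃ h : k ⟶ IsFiltered.coeq f g, f ≫ h = g ≫ h :=
    ⟨_, IsFiltered.coeq_condition f g⟩
  refine hK (f ≫ h) ?_
  calc (K.map (f ≫ h)).app Q x = (K.map h).app Q ((K.map f).app Q x) := by simp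
    _ = (K.map h).app Q ((K.map g).app Q y) := congrArg _ hfg
    _ = (K.map (f ≫ h)).app Q y := by rw [hh]; simp

theorem Cocone.range_ι_app_app_le_of_hom (c : Cocone K) {i j : J} (f : i ⟶ j) (Q : D) :
    ((c.ι.app i).app Q).hom.range ≤ ((c.ι.app j).app Q).hom.range := by
  rintro _ ⟨y, rfl⟩
  exact ⟨(K.map f).app Q y, by rw [← ConcreteCategory.comp_apply, ← NatTrans.comp_app, c.w]⟩

theorem IsColimit.exists_factorsAt_ι_app [IsFiltered J] {c : Cocone K} (hc : IsColimit c) {Q : D}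
    (hK : ∀ {i j : J} (f : i ⟶ j), Function.Injective ((K.map f).app Q))
    {E : D ⥤ AddCommGrpCat.{w}} [Module.Finite ℤ (E.obj Q)] (α : E ⟶ c.pt) :
    ∃ j, NatTrans.FactorsAt (c.ι.app j) α Q := by
  let p : J → Submodule ℤ (E.obj Q) := fun j =>
    ((c.ι.app j).app Q).hom.range.toIntSubmodule.comap (α.app Q).hom.toIntLinearMap
  have hp : Directed (· ≤ ·) p := fun i j =>
    ⟨IsFiltered.max i j,
      Submodule.comap_mono (c.range_ι_app_app_le_of_hom (IsFiltered.leftToMax i j) Q),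
      Submodule.comap_mono (c.range_ι_app_app_le_of_hom (IsFiltered.rightToMax i j) Q)⟩
  obtain ⟨j, hj⟩ := Module.Finite.exists_eq_top_of_directed hp fun x =>
    let ⟨j, y, hy⟩ := hc.exists_ι_app_app_eq (α.app Q x)
    ⟨j, y, hy⟩
  refine ⟨j, AddCommGrpCat.exists_comp_eq_of_range_le (hc.ι_app_app_injective hK j) ?_⟩
  rintro _ ⟨x, rfl⟩
  exact (Submodule.eq_top_iff'.1 hj) x

end CategoryTheory.Limits

theorem CategoryTheory.Functor.ofSequence_map_app_injective {D : Type u} [Category.{v} D]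
    {H : ℕ → D ⥤ AddCommGrpCat.{w}} (ν : ∀ n, H n ⟶ H (n + 1)) {Q : D}
    (hinj : ∀ n, Function.Injective ((ν n).app Q)) :
    ∀ {i j : ℕ} (f : i ⟶ j), Function.Injective (((Functor.ofSequence ν).map f).app Q) := by
  intro i j f
  rw [Subsingleton.elim f (homOfLE (leOfHom f))]
  generalize leOfHom f = hij
  clear f
  induction j, hij using Nat.le_induction with
  | base => simpa using Function.injective_id
  | succ n hin ih =>
    rw [show homOfLE (hin.trans n.le_succ) = homOfLE hin ≫ homOfLE n.le_succ from rfl,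
      Functor.map_comp, NatTrans.comp_app, Functor.ofSequence_map_homOfLE_succ]
    exact (hinj n).comp ih

theorem natTrans_to_colimit_factors_through_finite_stage_general
    {D : Type u} [Category.{v} D] [Preadditive D]
    (S : Set D) (hS : S.Finite)
    (hgen : ∀ Q : D, ∃ (n : ℕ) (g : Fin n → D) (_ : ∀ k, g k ∈ S)
      (hg : HasBiproduct g), Nonempty (Q ≅ @biproduct _ _ _ _ g hg))
    (H : ℕ → D ⥤ AddCommGrpCat.{w})
    (ν : ∀ n, H n ⟶ H (n + 1))
    (hinj : ∀ (n : ℕ) (Q : D), Function.Injective ((ν n).app Q))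
    (c : Cocone (Functor.ofSequence ν)) (hc : IsColimit c)
    (E : D ⥤ AddCommGrpCat.{w}) [E.Additive]
    (hfree : ∀ Q : D, Module.Free ℤ (E.obj Q) ∧ Module.Finite ℤ (E.obj Q))
    (α : E ⟶ c.pt) :
    ∃ (m : ℕ) (α' : E ⟶ H m), α = α' ≫ c.ι.app m := by
  have htrans (Q : D) :
      ∀ {i j : ℕ} (f : i ⟶ j), Function.Injective (((Functor.ofSequence ν).map f).app Q) :=
    Functor.ofSequence_map_app_injective ν (hinj · Q)
  have hstage (Q : D) : ∀ᶠ m in Filter.atTop, NatTrans.FactorsAt (c.ι.app m) α Q := by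
    have : Module.Finite ℤ (E.obj Q) := (hfree Q).2
    obtain ⟨m, hm⟩ := hc.exists_factorsAt_ι_app (htrans Q) α
    exact Filter.eventually_atTop.2 ⟨m, fun m' h => hm.ι_app_of_hom (homOfLE h)⟩
  obtain ⟨m, hm⟩ := (hS.eventually_all.2 fun Q _ => hstage Q).exists
  have hfactors (Q : D) : NatTrans.FactorsAt (c.ι.app m) α Q := by
    obtain ⟨n, g, hgS, hg, ⟨e⟩⟩ := hgen Q
    exact (NatTrans.FactorsAt.biproduct fun k => hm (g k) (hgS k)).of_iso e.symm
  have hmono (Q : D) : Mono ((c.ι.app m).app Q) :=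
    (AddCommGrpCat.mono_iff_injective _).2 (hc.ι_app_app_injective (htrans Q) m)
  obtain ⟨α', hα'⟩ := NatTrans.exists_comp_eq_of_forall_factorsAt hmono hfactors
  exact ⟨m, α', hα'.symm⟩

/-- **Factorization of natural transformations through a finite stage.**
Let `𝒟` be a preadditive category with a finite set `S` of objects such that every object of
`𝒟` is isomorphic to a finite biproduct of objects of `S`.  Let `(H n)` be an ℕ-indexed
inductive system of additive functors `𝒟 ⥤ AddCommGrp` with injective connecting natural
transformations `ν n : H n ⟶ H (n+1)`, and let `c` be a colimit cocone of the associated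
diagram `ℕ ⥤ (𝒟 ⥤ AddCommGrp)` (so `c.pt` is the colimit functor `H` and `c.ι.app n` are the
canonical natural transformations `λ_n`).  If `E : 𝒟 ⥤ AddCommGrp` is an additive functor
with `E.obj Q` a free abelian group of finite rank for every `Q`, then every natural
transformation `α : E ⟶ H` factors as `α = λ_m ∘ α′` for some `m` and some `α′ : E ⟶ H m`. -/
theorem natTrans_to_colimit_factors_through_finite_stage
    {D : Type u} [Category.{v} D] [Preadditive D]
    (S : Set D) (hS : S.Finite)
    (hgen : ∀ Q : D, ∃ (n : ℕ) (g : Fin n → D) (_ : ∀ k, g k ∈ S)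
      (hg : HasBiproduct g), Nonempty (Q ≅ @biproduct _ _ _ _ g hg))
    (H : ℕ → D ⥤ AddCommGrpCat.{w}) [∀ n, (H n).Additive]
    (ν : ∀ n, H n ⟶ H (n + 1))
    (hinj : ∀ (n : ℕ) (Q : D), Function.Injective ((ν n).app Q))
    (c : Cocone (Functor.ofSequence ν)) (hc : IsColimit c)
    (E : D ⥤ AddCommGrpCat.{w}) [E.Additive]
    (hfree : ∀ Q : D, Module.Free ℤ (E.obj Q) ∧ Module.Finite ℤ (E.obj Q))
    (α : E ⟶ c.pt) :
    ∃ (m : ℕ) (α' : E ⟶ H m), α = α' ≫ c.ι.app m :=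
  natTrans_to_colimit_factors_through_finite_stage_general S hS hgen H ν hinj c hc E hfree α
end

section
/- Let ℤ[1/4] denote the additive subgroup of ℚ consisting of all rationals of the form a / 4^n with a ∈ ℤ and n ∈ ℕ. Consider System A, the ℕ-indexed directed system of abelian groups with A_n = ℤ ⊕ ℤ for every n and every transition map A_n → A_{n+1} equal to (x, y) ↦ (2x + 2y, 2x + 2y). Then the assignment sending the class in the direct limit of an element (x, y) ∈ A_n to (x + y) / (2 · 4^n) ∈ ℚ is a well-defined group isomorphism from the direct limit of System A onto ℤ[1/4]. -/
/-!
System A is the ℕ-indexed directed system of abelian groups with `A_n = ℤ ⊕ ℤ` for every `n`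
and every transition map `A_n → A_(n+1)` given by `(x, y) ↦ (2x + 2y, 2x + 2y)`.
We formalize its direct limit via `AddCommGroup.DirectLimit`, where the transition map from
level `i` to level `j` (for `i ≤ j`) is the `(j - i)`-fold iterate of the step map.
`ℤ[1/4]` is realized as the set of rationals of the form `a / 4 ^ n`.
-/

/-- The step map of System A: `(x, y) ↦ (2x + 2y, 2x + 2y)`. -/
def stepA : (ℤ × ℤ) →+ (ℤ × ℤ) where
  toFun p := (2 * p.1 + 2 * p.2, 2 * p.1 + 2 * p.2)
  map_zero' := by simp
  map_add' p q := by
    simp only [Prod.fst_add, Prod.snd_add, Prod.mk_add_mk, Prod.mk.injEq]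
    constructor <;> ring

/-- `stepA` viewed as an additive monoid endomorphism, so that it can be iterated. -/
def stepAEnd : AddMonoid.End (ℤ × ℤ) := stepA

/-- System A: the transition map from level `i` to level `j` is the `(j-i)`-fold
iterate of `stepA`. -/
def sysA : ∀ i j : ℕ, i ≤ j → (ℤ × ℤ) →+ (ℤ × ℤ) :=
  fun i j _ => stepAEnd ^ (j - i)

/-!
`x + y` is multiplied by `4` at every step of System A, so `(x, y) ↦ (x + y) / (2 · 4 ^ n)` is
compatible with the transition maps and descends to the direct limit. Its kernel at level `n` is
`{x + y = 0}`, which the next transition map kills, so the induced map is injective. Its image is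
`⋃ₙ (x + y) / (2 · 4 ^ n) = ⋃ₙ ℤ / 4 ^ n`, because `a / 4 ^ n` is the image of `(a, a)`.
-/

namespace AddCommGroup.DirectLimit

variable {ι : Type*} [Preorder ι] [DecidableEq ι] [Nonempty ι] [IsDirectedOrder ι]
  {G : ι → Type*} {P : Type*} [AddCommMonoid P]

theorem range_lift [∀ i, AddCommMonoid (G i)] {f : ∀ i j, i ≤ j → G i →+ G j}
    {g : ∀ i, G i →+ P} {Hg : ∀ i j hij x, g j (f i j hij x) = g i x} :
    Set.range (lift G f P g Hg) = ⋃ i, Set.range (g i) := by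
  ext q
  simp only [Set.mem_range, Set.mem_iUnion]
  constructor
  · rintro ⟨z, rfl⟩
    induction z using DirectLimit.induction_on with
    | ih i x => exact ⟨i, x, (lift_of _ _ _ _ _).symm⟩
  · rintro ⟨i, x, rfl⟩
    exact ⟨of G f i x, lift_of _ _ _ _ _⟩

theorem lift_injective_of_forall_eq_zero [∀ i, AddCommGroup (G i)]
    {f : ∀ i j, i ≤ j → G i →+ G j}
    {g : ∀ i, G i →+ P} {Hg : ∀ i j hij x, g j (f i j hij x) = g i x}
    (hker : ∀ i x, g i x = 0 → ∃ j, ∃ hij : i ≤ j, f i j hij x = 0) :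
    Function.Injective (lift G f P g Hg) := by
  refine (injective_iff_map_eq_zero _).2 fun z hz => ?_
  induction z using DirectLimit.induction_on with
  | ih i x =>
    obtain ⟨j, hij, hx⟩ := hker i x (by rwa [lift_of] at hz)
    rw [← of_f hij, hx, map_zero]

end AddCommGroup.DirectLimit

namespace SysA

theorem stepA_fst_add_snd (x : ℤ × ℤ) : (stepA x).1 + (stepA x).2 = 4 * (x.1 + x.2) := by
  change (2 * x.1 + 2 * x.2) + (2 * x.1 + 2 * x.2) = _
  ring

theorem stepAEnd_pow_fst_add_snd (k : ℕ) (x : ℤ × ℤ) :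
    ((stepAEnd ^ k) x).1 + ((stepAEnd ^ k) x).2 = 4 ^ k * (x.1 + x.2) := by
  induction k with
  | zero => simp
  | succ k ih =>
    rw [AddMonoid.End.coe_pow, Function.iterate_succ_apply', ← AddMonoid.End.coe_pow]
    calc _ = 4 * (((stepAEnd ^ k) x).1 + ((stepAEnd ^ k) x).2) := stepA_fst_add_snd _
      _ = _ := by rw [ih]; ring

theorem stepA_eq_zero {x : ℤ × ℤ} (hx : x.1 + x.2 = 0) : stepA x = 0 := by
  change (2 * x.1 + 2 * x.2, 2 * x.1 + 2 * x.2) = ((0 : ℤ), (0 : ℤ))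
  rw [← mul_add, hx, mul_zero]

def weight (n : ℕ) : ℤ × ℤ →+ ℚ :=
  AddMonoidHom.mk' (fun x => ((x.1 : ℚ) + x.2) / (2 * 4 ^ n)) fun x y => by
    simp only [Prod.fst_add, Prod.snd_add, Int.cast_add]
    ring

theorem weight_apply (n : ℕ) (x : ℤ × ℤ) :
    weight n x = ((x.1 : ℚ) + x.2) / (2 * 4 ^ n) := rfl

theorem weight_sysA (i j : ℕ) (hij : i ≤ j) (x : ℤ × ℤ) :
    weight j (sysA i j hij x) = weight i x := by
  have hsum :
      (((sysA i j hij x).1 : ℚ) + (sysA i j hij x).2) = 4 ^ (j - i) * (x.1 + x.2) := by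
    exact_mod_cast stepAEnd_pow_fst_add_snd (j - i) x
  rw [weight_apply, weight_apply, hsum, ← pow_sub_mul_pow 4 hij]
  field_simp

theorem weight_eq_zero_iff {n : ℕ} {x : ℤ × ℤ} : weight n x = 0 ↔ x.1 + x.2 = 0 := by
  rw [weight_apply, div_eq_zero_iff, or_iff_left (by positivity), ← Int.cast_add,
    Int.cast_eq_zero]

theorem sysA_succ_eq_zero {n : ℕ} {x : ℤ × ℤ} (hx : weight n x = 0) :
    sysA n (n + 1) n.le_succ x = 0 := by
  rw [sysA, Nat.add_sub_cancel_left, pow_one]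
  exact stepA_eq_zero (weight_eq_zero_iff.1 hx)

theorem iUnion_range_weight :
    ⋃ n, Set.range (weight n) = {q : ℚ | ∃ (a : ℤ) (n : ℕ), q = (a : ℚ) / 4 ^ n} := by
  ext q
  simp only [Set.mem_iUnion, Set.mem_range, Set.mem_ofPred_eq]
  constructor
  · rintro ⟨n, x, rfl⟩
    refine ⟨2 * (x.1 + x.2), n + 1, ?_⟩
    rw [weight_apply, pow_succ]
    push_cast
    field_simp
    ring
  · rintro ⟨a, n, rfl⟩
    refine ⟨n, (a, a), ?_⟩
    rw [weight_apply]
    field_simp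
    ring

end SysA

open AddCommGroup.DirectLimit SysA in
/-- The assignment sending the class of `(x, y) ∈ A_n` in the direct limit of System A to
`(x + y) / (2 · 4 ^ n)` is a well-defined group homomorphism which is an isomorphism onto
the subgroup `ℤ[1/4] = {a / 4 ^ n : a ∈ ℤ, n ∈ ℕ} ⊆ ℚ`. -/
theorem directLimit_sysA_iso_zOneFourth :
    ∃ φ : AddCommGroup.DirectLimit (fun _ : ℕ => ℤ × ℤ) sysA →+ ℚ,
      (∀ (n : ℕ) (x : ℤ × ℤ),
        φ (AddCommGroup.DirectLimit.of (fun _ : ℕ => ℤ × ℤ) sysA n x)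
          = ((x.1 : ℚ) + (x.2 : ℚ)) / (2 * 4 ^ n)) ∧
      Function.Injective φ ∧
      Set.range φ = {q : ℚ | ∃ (a : ℤ) (n : ℕ), q = (a : ℚ) / 4 ^ n} :=
  ⟨lift _ sysA ℚ weight weight_sysA, fun _ _ => lift_of _ _ _ _ _,
    lift_injective_of_forall_eq_zero fun n _ hx => ⟨n + 1, n.le_succ, sysA_succ_eq_zero hx⟩,
    (range_lift).trans iUnion_range_weight⟩
end

section
/- Let ℤ[1/4] denote the additive subgroup of ℚ consisting of all rationals of the form a / 4^n with a ∈ ℤ and n ∈ ℕ. Consider System A (A_n = ℤ ⊕ ℤ with every transition map (x, y) ↦ (2x + 2y, 2x + 2y)) and System B (B_n = ℤ⁴ with every transition map (x, y, z, w) ↦ (s, s, s, s), s = x + y + z + w). The levelwise maps L_n : A_n → B_n, (x, y) ↦ (x, y, x, y), commute with the transition maps of the two systems, and hence induce a group homomorphism L : colim A_n → colim B_n on the direct limits. Under the isomorphism φ : colim A_n ≅ ℤ[1/4] (class of (x, y) ∈ A_n ↦ (x + y) / (2 · 4^n)) and the isomorphism ψ : colim B_n ≅ ℤ[1/4] (class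 of (x, y, z, w) ∈ B_n ↦ (x + y + z + w) / 4^{n+1}), the induced map L corresponds to the identity map of ℤ[1/4]; that is, ψ ∘ L = φ. -/
/-- The step map of System B: `(x, y, z, w) ↦ (s, s, s, s)` where `s = x + y + z + w`. -/
def stepB : (ℤ × ℤ × ℤ × ℤ) →+ (ℤ × ℤ × ℤ × ℤ) where
  toFun p := (p.1 + p.2.1 + p.2.2.1 + p.2.2.2, p.1 + p.2.1 + p.2.2.1 + p.2.2.2,
    p.1 + p.2.1 + p.2.2.1 + p.2.2.2, p.1 + p.2.1 + p.2.2.1 + p.2.2.2)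
  map_zero' := by simp
  map_add' p q := by
    simp only [Prod.fst_add, Prod.snd_add, Prod.mk_add_mk, Prod.mk.injEq]
    refine ⟨?_, ?_, ?_, ?_⟩ <;> ring

/-- `stepB` viewed as an additive monoid endomorphism, so that it can be iterated. -/
def stepBEnd : AddMonoid.End (ℤ × ℤ × ℤ × ℤ) := stepB

/-- System B: the transition map from level `i` to level `j` is the `(j-i)`-fold
iterate of `stepB`. -/
def sysB : ∀ i j : ℕ, i ≤ j → (ℤ × ℤ × ℤ × ℤ) →+ (ℤ × ℤ × ℤ × ℤ) :=
  fun i j _ => stepBEnd ^ (j - i)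

/-- The levelwise map `L_n : A_n → B_n`, `(x, y) ↦ (x, y, x, y)`. -/
def LmapAB : (ℤ × ℤ) →+ (ℤ × ℤ × ℤ × ℤ) where
  toFun p := (p.1, p.2, p.1, p.2)
  map_zero' := by simp
  map_add' p q := by
    simp only [Prod.fst_add, Prod.snd_add, Prod.mk_add_mk, Prod.mk.injEq]

theorem stepB_LmapAB (x : ℤ × ℤ) : stepB (LmapAB x) = LmapAB (stepA x) := by
  simp only [stepA, stepB, LmapAB, AddMonoidHom.coe_mk, ZeroHom.coe_mk]
  ring_nf

theorem LmapAB_comp_sysA (i j : ℕ) (hij : i ≤ j) :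
    LmapAB.comp (sysA i j hij) = (sysB i j hij).comp LmapAB :=
  AddMonoidHom.ext <| Function.Semiconj.iterate_right (fun x => (stepB_LmapAB x).symm) (j - i)

/-- The levelwise maps `(x, y) ↦ (x, y, x, y)` commute with the transition maps of
Systems A and B, hence induce a group homomorphism `L` on the direct limits; under the
isomorphisms `φ : colim A_n ≅ ℤ[1/4]` and `ψ : colim B_n ≅ ℤ[1/4]`, the induced map `L`
corresponds to the identity of `ℤ[1/4]`, i.e. `ψ ∘ L = φ`. -/
theorem inducedMap_LmapAB_corresponds_to_id :
    (∀ x : ℤ × ℤ, stepB (LmapAB x) = LmapAB (stepA x)) ∧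
    ∃ L : AddCommGroup.DirectLimit (fun _ : ℕ => ℤ × ℤ) sysA →+ AddCommGroup.DirectLimit (fun _ : ℕ => ℤ × ℤ × ℤ × ℤ) sysB,
      (∀ (n : ℕ) (x : ℤ × ℤ), L (AddCommGroup.DirectLimit.of (fun _ : ℕ => ℤ × ℤ) sysA n x) = AddCommGroup.DirectLimit.of (fun _ : ℕ => ℤ × ℤ × ℤ × ℤ) sysB n (LmapAB x)) ∧
      ∀ (φ : AddCommGroup.DirectLimit (fun _ : ℕ => ℤ × ℤ) sysA →+ ℚ) (ψ : AddCommGroup.DirectLimit (fun _ : ℕ => ℤ × ℤ × ℤ × ℤ) sysB →+ ℚ),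
        (∀ (n : ℕ) (x : ℤ × ℤ), φ (AddCommGroup.DirectLimit.of (fun _ : ℕ => ℤ × ℤ) sysA n x) = ((x.1 : ℚ) + (x.2 : ℚ)) / (2 * 4 ^ n)) →
        (∀ (n : ℕ) (x : ℤ × ℤ × ℤ × ℤ), ψ (AddCommGroup.DirectLimit.of (fun _ : ℕ => ℤ × ℤ × ℤ × ℤ) sysB n x) = ((x.1 : ℚ) + (x.2.1 : ℚ) + (x.2.2.1 : ℚ) + (x.2.2.2 : ℚ)) / 4 ^ (n + 1)) →
        ∀ a, ψ (L a) = φ a := by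
  refine ⟨stepB_LmapAB, AddCommGroup.DirectLimit.map (fun _ => LmapAB) LmapAB_comp_sysA,
    fun n x => AddCommGroup.DirectLimit.map_apply_of (fun _ => LmapAB) LmapAB_comp_sysA x, ?_⟩
  intro φ ψ hφ hψ a
  induction a using AddCommGroup.DirectLimit.induction_on with
  | ih n x =>
    rw [AddCommGroup.DirectLimit.map_apply_of, hψ, hφ]
    simp only [LmapAB, AddMonoidHom.coe_mk, ZeroHom.coe_mk]
    rw [pow_succ]
    ring
end

section
/- Let ℤ[1/4] denote the additive subgroup of ℚ consisting of all rationals of the form a / 4^n with a ∈ ℤ and n ∈ ℕ. Consider System B (B_n = ℤ⁴ with every transition map (x, y, z, w) ↦ (s, s, s, s), s = x + y + z + w) and System A (A_n = ℤ ⊕ ℤ with every transition map (x, y) ↦ (2x + 2y, 2x + 2y)). The levelwise maps K_n : B_n → A_n, (x, y, z, w) ↦ (x + z, y + w), commute with the transition maps of the two systems, and hence induce a group homomorphism K : colim B_n → colim A_n on the direct limits. Under the isomorphism ψ : colim B_n ≅ ℤ[1/4] (class of (x, y, z, w) ∈ B_n ↦ (x + y + z + w) / 4^{n+1}) and the isomorphism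 φ : colim A_n ≅ ℤ[1/4] (class of (x, y) ∈ A_n ↦ (x + y) / (2 · 4^n)), the induced map K corresponds to multiplication by 2 on ℤ[1/4]; that is, φ ∘ K = 2 · ψ. -/
/-- The levelwise map `K_n : B_n → A_n`, `(x, y, z, w) ↦ (x + z, y + w)`. -/
def KmapBA : (ℤ × ℤ × ℤ × ℤ) →+ (ℤ × ℤ) where
  toFun p := (p.1 + p.2.2.1, p.2.1 + p.2.2.2)
  map_zero' := by simp
  map_add' p q := by
    simp only [Prod.fst_add, Prod.snd_add, Prod.mk_add_mk, Prod.mk.injEq]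
    constructor <;> ring

/-!
The levelwise map `K_n` preserves the total sum `x + y + z + w` of a vector, and it
intertwines the transition maps, so it induces `K` on the direct limits. On the class of
`v ∈ B_n` with total sum `s`, `ψ` gives `s / 4 ^ (n + 1)` while `φ ∘ K` gives
`s / (2 * 4 ^ n)`, which is twice as large.
-/

theorem KmapBA_stepB (x : ℤ × ℤ × ℤ × ℤ) : KmapBA (stepB x) = stepA (KmapBA x) := by
  simp only [stepA, stepB, KmapBA, AddMonoidHom.coe_mk, ZeroHom.coe_mk, Prod.mk.injEq]
  constructor <;> ring

theorem KmapBA_comp_sysB (i j : ℕ) (h : i ≤ j) :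
    KmapBA.comp (sysB i j h) = (sysA i j h).comp KmapBA :=
  AddMonoidHom.ext fun x => (Function.Semiconj.iterate_right KmapBA_stepB (j - i)) x

theorem KmapBA_fst_add_snd (x : ℤ × ℤ × ℤ × ℤ) :
    (KmapBA x).1 + (KmapBA x).2 = x.1 + x.2.1 + x.2.2.1 + x.2.2.2 := by
  simp only [KmapBA, AddMonoidHom.coe_mk, ZeroHom.coe_mk]
  ring

noncomputable def inducedKmapBA :
    AddCommGroup.DirectLimit (fun _ : ℕ => ℤ × ℤ × ℤ × ℤ) sysB →+
      AddCommGroup.DirectLimit (fun _ : ℕ => ℤ × ℤ) sysA :=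
  AddCommGroup.DirectLimit.map (fun _ => KmapBA) KmapBA_comp_sysB

theorem inducedKmapBA_of (n : ℕ) (x : ℤ × ℤ × ℤ × ℤ) :
    inducedKmapBA (AddCommGroup.DirectLimit.of (fun _ : ℕ => ℤ × ℤ × ℤ × ℤ) sysB n x) =
      AddCommGroup.DirectLimit.of (fun _ : ℕ => ℤ × ℤ) sysA n (KmapBA x) :=
  AddCommGroup.DirectLimit.map_apply_of _ KmapBA_comp_sysB x

theorem two_mul_div_four_pow_succ (s : ℚ) (n : ℕ) :
    2 * (s / 4 ^ (n + 1)) = s / (2 * 4 ^ n) := by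
  field_simp
  ring

/-- The levelwise maps `(x, y, z, w) ↦ (x + z, y + w)` commute with the transition maps of
Systems B and A, hence induce a group homomorphism `K` on the direct limits; under the
isomorphisms `ψ : colim B_n ≅ ℤ[1/4]` and `φ : colim A_n ≅ ℤ[1/4]`, the induced map `K`
corresponds to multiplication by `2` on `ℤ[1/4]`, i.e. `φ ∘ K = 2 · ψ`. -/
theorem inducedMap_KmapBA_corresponds_to_two :
    (∀ x : ℤ × ℤ × ℤ × ℤ, stepA (KmapBA x) = KmapBA (stepB x)) ∧
    ∃ K : AddCommGroup.DirectLimit (fun _ : ℕ => ℤ × ℤ × ℤ × ℤ) sysB →+ AddCommGroup.DirectLimit (fun _ : ℕ => ℤ × ℤ) sysA,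
      (∀ (n : ℕ) (x : ℤ × ℤ × ℤ × ℤ), K (AddCommGroup.DirectLimit.of (fun _ : ℕ => ℤ × ℤ × ℤ × ℤ) sysB n x) = AddCommGroup.DirectLimit.of (fun _ : ℕ => ℤ × ℤ) sysA n (KmapBA x)) ∧
      ∀ (ψ : AddCommGroup.DirectLimit (fun _ : ℕ => ℤ × ℤ × ℤ × ℤ) sysB →+ ℚ) (φ : AddCommGroup.DirectLimit (fun _ : ℕ => ℤ × ℤ) sysA →+ ℚ),
        (∀ (n : ℕ) (x : ℤ × ℤ × ℤ × ℤ), ψ (AddCommGroup.DirectLimit.of (fun _ : ℕ => ℤ × ℤ × ℤ × ℤ) sysB n x) = ((x.1 : ℚ) + (x.2.1 : ℚ) + (x.2.2.1 : ℚ) + (x.2.2.2 : ℚ)) / 4 ^ (n + 1)) →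
        (∀ (n : ℕ) (x : ℤ × ℤ), φ (AddCommGroup.DirectLimit.of (fun _ : ℕ => ℤ × ℤ) sysA n x) = ((x.1 : ℚ) + (x.2 : ℚ)) / (2 * 4 ^ n)) →
        ∀ a, φ (K a) = 2 * ψ a := by
  refine ⟨fun x => (KmapBA_stepB x).symm, inducedKmapBA, inducedKmapBA_of, ?_⟩
  intro ψ φ hψ hφ a
  induction a using AddCommGroup.DirectLimit.induction_on with
  | ih n x =>
    have hsum : ((KmapBA x).1 : ℚ) + (KmapBA x).2 = x.1 + x.2.1 + x.2.2.1 + x.2.2.2 := by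
      exact_mod_cast KmapBA_fst_add_snd x
    rw [inducedKmapBA_of, hφ, hψ, hsum, two_mul_div_four_pow_succ]
end

section
/- Let ℤ[1/4] denote the additive subgroup of ℚ consisting of all rationals of the form a / 4^n with a ∈ ℤ and n ∈ ℕ. Consider System A, the ℕ-indexed directed system of abelian groups with A_n = ℤ ⊕ ℤ and every transition map (x, y) ↦ (2x + 2y, 2x + 2y). The levelwise maps T_n : A_n → A_n, (x, y) ↦ (x + y, x + y), commute with the transition maps of System A, and hence induce a group endomorphism T of the direct limit colim A_n. Under the isomorphism φ : colim A_n ≅ ℤ[1/4] (class of (x, y) ∈ A_n ↦ (x + y) / (2 · 4^n)), the induced map T corresponds to multiplication by 2 on ℤ[1/4]; that is, φ ∘ T = 2 · φ. -/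
/-- The levelwise map `T_n : A_n → A_n`, `(x, y) ↦ (x + y, x + y)`. -/
def TmapAA : (ℤ × ℤ) →+ (ℤ × ℤ) where
  toFun p := (p.1 + p.2, p.1 + p.2)
  map_zero' := by simp
  map_add' p q := by
    simp only [Prod.fst_add, Prod.snd_add, Prod.mk_add_mk, Prod.mk.injEq]
    constructor <;> ring

/-!
Both `stepA` and `TmapAA` factor through `s(x, y) = x + y`, so they commute, hence `TmapAA`
commutes with every transition map and descends to the direct limit. Since `s ∘ TmapAA = 2 s`
and `φ = s / (2 · 4ⁿ)` on level `n`, the identity `φ ∘ T = 2 φ` holds on every generator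
`of n x`, and these generate the direct limit.
-/

theorem stepA_TmapAA_comm (x : ℤ × ℤ) : stepA (TmapAA x) = TmapAA (stepA x) := by
  simp only [stepA, TmapAA, AddMonoidHom.coe_mk, ZeroHom.coe_mk, Prod.mk.injEq]
  constructor <;> ring

theorem commute_stepAEnd_TmapAA : Commute stepAEnd TmapAA :=
  AddMonoidHom.ext stepA_TmapAA_comm

theorem TmapAA_comp_sysA (i j : ℕ) (hij : i ≤ j) :
    TmapAA.comp (sysA i j hij) = (sysA i j hij).comp TmapAA :=
  (commute_stepAEnd_TmapAA.pow_left (j - i)).eq.symm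

theorem TmapAA_fst_add_snd (x : ℤ × ℤ) : (TmapAA x).1 + (TmapAA x).2 = 2 * (x.1 + x.2) := by
  simp only [TmapAA, AddMonoidHom.coe_mk, ZeroHom.coe_mk]
  ring

noncomputable def inducedTmap :
    AddCommGroup.DirectLimit (fun _ : ℕ => ℤ × ℤ) sysA →+
      AddCommGroup.DirectLimit (fun _ : ℕ => ℤ × ℤ) sysA :=
  AddCommGroup.DirectLimit.map (fun _ => TmapAA) TmapAA_comp_sysA

theorem inducedTmap_of (n : ℕ) (x : ℤ × ℤ) :
    inducedTmap (AddCommGroup.DirectLimit.of (fun _ : ℕ => ℤ × ℤ) sysA n x) =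
      AddCommGroup.DirectLimit.of (fun _ : ℕ => ℤ × ℤ) sysA n (TmapAA x) := by
  apply AddCommGroup.DirectLimit.map_apply_of

/-- The levelwise maps `(x, y) ↦ (x + y, x + y)` commute with the transition maps of
System A, hence induce a group endomorphism `T` of the direct limit; under the isomorphism
`φ : colim A_n ≅ ℤ[1/4]`, the induced map `T` corresponds to multiplication by `2` on
`ℤ[1/4]`, i.e. `φ ∘ T = 2 · φ`. -/
theorem inducedMap_TmapAA_corresponds_to_two :
    (∀ x : ℤ × ℤ, stepA (TmapAA x) = TmapAA (stepA x)) ∧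
    ∃ T : AddCommGroup.DirectLimit (fun _ : ℕ => ℤ × ℤ) sysA →+ AddCommGroup.DirectLimit (fun _ : ℕ => ℤ × ℤ) sysA,
      (∀ (n : ℕ) (x : ℤ × ℤ), T (AddCommGroup.DirectLimit.of (fun _ : ℕ => ℤ × ℤ) sysA n x) = AddCommGroup.DirectLimit.of (fun _ : ℕ => ℤ × ℤ) sysA n (TmapAA x)) ∧
      ∀ (φ : AddCommGroup.DirectLimit (fun _ : ℕ => ℤ × ℤ) sysA →+ ℚ),
        (∀ (n : ℕ) (x : ℤ × ℤ), φ (AddCommGroup.DirectLimit.of (fun _ : ℕ => ℤ × ℤ) sysA n x) = ((x.1 : ℚ) + (x.2 : ℚ)) / (2 * 4 ^ n)) →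
        ∀ a, φ (T a) = 2 * φ a := by
  refine ⟨stepA_TmapAA_comm, inducedTmap, inducedTmap_of, fun φ hφ a => ?_⟩
  induction a using AddCommGroup.DirectLimit.induction_on with
  | ih n x =>
    have hsum : ((TmapAA x).1 : ℚ) + (TmapAA x).2 = 2 * (x.1 + x.2) := by
      exact_mod_cast TmapAA_fst_add_snd x
    rw [inducedTmap_of, hφ, hφ, hsum, mul_div_assoc]
end
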